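/- arXiv:2312.12353 — 6 statements merged into one kernel-verified Lean document; each statement's English description precedes it below -/
import Mathlib

section
/- Let V be a real Hilbert space, V_n a finite-dimensional subspace and W_m a complete subspace of V. If β(V_n, W_m) := inf_{v∈V_n\{0}} ‖P_{W_m} v‖/‖v‖ > 0, then the linear operator on V_n defined by v ↦ P_{V_n}(P_{W_m} v) is bijective. -/
/-! If `x ∈ X` and `P_X (P_Y x) = 0`, then `‖P_Y x‖² = ⟪P_Y x, x⟫ = 0`, because `x ∈ X` is orthogonal
to `P_Y x ∈ Xᗮ`. A positive inf-sup constant rules out `P_Y x = 0` for `x ≠ 0` in `X`, so the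
operator `P_X ∘ P_Y` on `X` is injective, hence bijective since `X` is finite-dimensional. -/

namespace Submodule

variable {𝕜 E : Type*} [RCLike 𝕜] [NormedAddCommGroup E] [InnerProductSpace 𝕜 E]

theorem starProjection_starProjection_eq_zero_iff (U K : Submodule 𝕜 E)
    [U.HasOrthogonalProjection] [K.HasOrthogonalProjection] {v : E} (hv : v ∈ U) :
    U.starProjection (K.starProjection v) = 0 ↔ K.starProjection v = 0 := by
  refine ⟨fun h => ?_, fun h => by rw [h, map_zero]⟩
  have horth : inner 𝕜 (K.starProjection v) v = 0 :=
    inner_left_of_mem_orthogonal hv ((U.starProjection_apply_eq_zero_iff).mp h)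
  have hnorm := K.re_inner_starProjection_eq_normSq v
  rw [horth, map_zero, eq_comm, sq_eq_zero_iff, norm_eq_zero] at hnorm
  simp [starProjection_apply, hnorm]

end Submodule

section InfSup

variable {V : Type*} [NormedAddCommGroup V] [InnerProductSpace ℝ V]

/-- `β(X, Y)`; since `sInf ∅ = 0`, this is `0` (not `+∞`) for `X = ⊥`. -/
noncomputable def infSup (X Y : Submodule ℝ V) [Y.HasOrthogonalProjection] : ℝ :=
  sInf {r : ℝ | ∃ v ∈ X, v ≠ 0 ∧ r = ‖(Y.orthogonalProjectionOnto v : V)‖ / ‖v‖}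

theorem infSup_le_div {X Y : Submodule ℝ V} [Y.HasOrthogonalProjection] {v : V} (hv : v ∈ X)
    (hv0 : v ≠ 0) : infSup X Y ≤ ‖Y.starProjection v‖ / ‖v‖ := by
  refine csInf_le ⟨0, ?_⟩ ⟨v, hv, hv0, rfl⟩
  rintro r ⟨w, -, -, rfl⟩
  positivity

theorem starProjection_ne_zero_of_infSup_pos {X Y : Submodule ℝ V} [Y.HasOrthogonalProjection]
    (hβ : 0 < infSup X Y) {v : V} (hv : v ∈ X) (hv0 : v ≠ 0) : Y.starProjection v ≠ 0 := by
  intro h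
  have := infSup_le_div (Y := Y) hv hv0
  rw [h, norm_zero, zero_div] at this
  exact this.not_gt hβ

theorem bijective_orthogonalProjection_starProjection_of_infSup_pos (X Y : Submodule ℝ V)
    [FiniteDimensional ℝ X] [Y.HasOrthogonalProjection] (hβ : 0 < infSup X Y) :
    Function.Bijective (fun v : X => X.orthogonalProjectionOnto (Y.starProjection v)) := by
  let f : X →ₗ[ℝ] X := X.orthogonalProjectionOnto.toLinearMap ∘ₗ Y.starProjection.toLinearMap ∘ₗ
    X.subtype
  have hinj : Function.Injective f := by
    refine (injective_iff_map_eq_zero f).mpr fun v hv => ?_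
    have hXY : X.starProjection (Y.starProjection v) = 0 := by
      rw [Submodule.starProjection_apply]
      exact congrArg Subtype.val hv
    by_contra hv0
    exact starProjection_ne_zero_of_infSup_pos hβ v.2 (by simpa using hv0)
      ((X.starProjection_starProjection_eq_zero_iff Y v.2).mp hXY)
  exact ⟨hinj, LinearMap.injective_iff_surjective.mp hinj⟩

end InfSup

/-- If the inf-sup constant
`β(V_n, W_m) := inf_{v ∈ V_n \ {0}} ‖P_{W_m} v‖ / ‖v‖` is positive, with `V_n`
finite-dimensional and `W_m` complete, then the linear operator on `V_n` given by
`v ↦ P_{V_n}(P_{W_m} v)` is bijective. -/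
theorem stmt1 {V : Type*} [NormedAddCommGroup V] [InnerProductSpace ℝ V]
    (Vn Wm : Submodule ℝ V) [FiniteDimensional ℝ Vn] [CompleteSpace Wm]
    (hβ : 0 < sInf {r : ℝ | ∃ v ∈ Vn, v ≠ 0 ∧
      r = ‖(Wm.orthogonalProjection v : V)‖ / ‖v‖}) :
    Function.Bijective (fun v : Vn =>
      Vn.orthogonalProjection ((Wm.orthogonalProjection (v : V) : V))) :=
  bijective_orthogonalProjection_starProjection_of_infSup_pos Vn Wm hβ
end

section
/- Let V be a real Hilbert space, V_n a finite-dimensional subspace and W_m a complete subspace of V with β(V_n, W_m) > 0. Fix ω ∈ W_m, let v*(ω) := (P_{V_n}∘P_{W_m}|_{V_n})^{-1}(P_{V_n} ω) ∈ V_n, and set u*(ω) := v*(ω) + ω − P_{W_m} v*(ω). Then u*(ω) lies in the affine set ω + W_m^⊥ (i.e. P_{W_m} u*(ω) = ω), and u*(ω) is the unique minimizer over all v ∈ ω + W_m^⊥ of the quantity ‖v − P_{V_n} v‖. -/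
/-!
Write `P_X` for the orthogonal projection onto `X`. The reconstruction `u*` satisfies
`P_{W_m} u* = ω` and `P_{V_n} u* = v*`, so its residual `u* − P_{V_n} u* = ω − P_{W_m} v*` lies in
`W_m`. Any other admissible `v` differs from `u*` by some `w ∈ W_mᗮ`, which is orthogonal to that
residual, whence `‖v − P_{V_n} v‖² = ‖u* − P_{V_n} u*‖² + ‖w − P_{V_n} w‖²`. Equality forces
`w ∈ V_n ∩ W_mᗮ`, and this intersection is trivial when `β(V_n, W_m) > 0`.
-/

open scoped InnerProductSpace

namespace Submodule

variable {𝕜 V : Type*} [RCLike 𝕜] [NormedAddCommGroup V] [InnerProductSpace 𝕜 V]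

noncomputable def infSup (X Y : Submodule 𝕜 V) [Y.HasOrthogonalProjection] : ℝ :=
  sInf {r : ℝ | ∃ v ∈ X, v ≠ 0 ∧ r = ‖Y.starProjection v‖ / ‖v‖}

theorem inf_orthogonal_eq_bot_of_infSup_pos {X Y : Submodule 𝕜 V}
    [Y.HasOrthogonalProjection] (hβ : 0 < infSup X Y) : X ⊓ Yᗮ = ⊥ := by
  refine (Submodule.eq_bot_iff _).mpr fun v ⟨hvX, hvY⟩ => ?_
  by_contra hv
  have hbdd : BddBelow {r : ℝ | ∃ v ∈ X, v ≠ 0 ∧ r = ‖Y.starProjection v‖ / ‖v‖} :=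
    ⟨0, by rintro _ ⟨u, -, -, rfl⟩; positivity⟩
  have hzero : (0 : ℝ) ∈ {r : ℝ | ∃ v ∈ X, v ≠ 0 ∧ r = ‖Y.starProjection v‖ / ‖v‖} :=
    ⟨v, hvX, hv, by simp [(starProjection_apply_eq_zero_iff Y).mpr hvY]⟩
  exact (csInf_le hbdd hzero).not_gt hβ

theorem norm_add_sub_starProjection_sq (K : Submodule 𝕜 V) [K.HasOrthogonalProjection]
    {u w : V} (h : ⟪u - K.starProjection u, w⟫_𝕜 = 0) :
    ‖u + w - K.starProjection (u + w)‖ ^ 2 =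
      ‖u - K.starProjection u‖ ^ 2 + ‖w - K.starProjection w‖ ^ 2 := by
  have hsplit : u + w - K.starProjection (u + w) =
      (u - K.starProjection u) + (w - K.starProjection w) := by
    rw [map_add]; abel
  have horth : ⟪u - K.starProjection u, w - K.starProjection w⟫_𝕜 = 0 := by
    rw [inner_sub_right, h, K.starProjection_inner_eq_zero u _ (K.starProjection_apply_mem w),
      sub_zero]
  simp only [hsplit, sq, norm_add_sq_eq_norm_sq_add_norm_sq_of_inner_eq_zero _ _ horth]

section Minimizer

variable {X Y : Submodule 𝕜 V} [X.HasOrthogonalProjection] {u v : V}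

theorem norm_sub_starProjection_sq_eq (hu : u - X.starProjection u ∈ Y)
    (hv : v - u ∈ Yᗮ) :
    ‖v - X.starProjection v‖ ^ 2 =
      ‖u - X.starProjection u‖ ^ 2 + ‖(v - u) - X.starProjection (v - u)‖ ^ 2 := by
  simpa using X.norm_add_sub_starProjection_sq (inner_right_of_mem_orthogonal hu hv)

theorem norm_sub_starProjection_le (hu : u - X.starProjection u ∈ Y)
    (hv : v - u ∈ Yᗮ) : ‖u - X.starProjection u‖ ≤ ‖v - X.starProjection v‖ := by
  have hsq := norm_sub_starProjection_sq_eq hu hv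
  exact (pow_le_pow_iff_left₀ (norm_nonneg _) (norm_nonneg _) two_ne_zero).mp
    (by rw [hsq]; exact le_add_of_nonneg_right (sq_nonneg _))

theorem eq_of_norm_sub_starProjection_eq [Y.HasOrthogonalProjection]
    (hβ : 0 < infSup X Y) (hu : u - X.starProjection u ∈ Y) (hv : v - u ∈ Yᗮ)
    (heq : ‖v - X.starProjection v‖ = ‖u - X.starProjection u‖) : v = u := by
  have hres : (v - u) - X.starProjection (v - u) = 0 := by
    have hsq := norm_sub_starProjection_sq_eq hu hv
    rwa [heq, left_eq_add, sq_eq_zero_iff, norm_eq_zero] at hsq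
  have hvX : v - u ∈ X := starProjection_eq_self_iff.mp (sub_eq_zero.mp hres).symm
  have hbot := inf_orthogonal_eq_bot_of_infSup_pos hβ
  exact sub_eq_zero.mp ((Submodule.eq_bot_iff _).mp hbot _ ⟨hvX, hv⟩)

end Minimizer

theorem starProjection_add_sub_starProjection (K : Submodule 𝕜 V)
    [K.HasOrthogonalProjection] {ω : V} (hω : ω ∈ K) (v : V) :
    K.starProjection (v + ω - K.starProjection v) = ω := by
  rw [map_sub, map_add, starProjection_eq_self_iff.mpr hω,
    starProjection_eq_self_iff.mpr (K.starProjection_apply_mem v)]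
  abel

theorem sub_starProjection_add_sub_starProjection (X Y : Submodule 𝕜 V)
    [X.HasOrthogonalProjection] [Y.HasOrthogonalProjection] {v ω : V} (hv : v ∈ X)
    (hvω : X.starProjection (Y.starProjection v) = X.starProjection ω) :
    v + ω - Y.starProjection v - X.starProjection (v + ω - Y.starProjection v) =
      ω - Y.starProjection v := by
  rw [map_sub, map_add, hvω, starProjection_eq_self_iff.mpr hv]; abel

end Submodule

open Submodule in
/-- With `β(V_n, W_m) > 0`, for `ω ∈ W_m`, the PBDW reconstruction
`u*(ω) = v*(ω) + ω − P_{W_m} v*(ω)` (where `v*(ω)` is characterized by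
`P_{V_n}(P_{W_m} v*(ω)) = P_{V_n} ω`) satisfies `P_{W_m} u*(ω) = ω` (i.e. it lies in
`ω + W_m^⊥`) and is the unique minimizer of `‖v − P_{V_n} v‖` over `v ∈ ω + W_m^⊥`. -/
theorem stmt2 {V : Type*} [NormedAddCommGroup V] [InnerProductSpace ℝ V]
    (Vn Wm : Submodule ℝ V) [FiniteDimensional ℝ Vn] [CompleteSpace Wm]
    (hβ : 0 < sInf {r : ℝ | ∃ v ∈ Vn, v ≠ 0 ∧
      r = ‖(Submodule.orthogonalProjectionOnto Wm v : V)‖ / ‖v‖})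
    (ω : V) (hω : ω ∈ Wm)
    (vstar : Vn)
    (hvstar : Submodule.orthogonalProjectionOnto Vn ((Submodule.orthogonalProjectionOnto Wm (vstar : V) : V))
      = Submodule.orthogonalProjectionOnto Vn ω) :
    ∀ ustar : V,
      ustar = (vstar : V) + ω - (Submodule.orthogonalProjectionOnto Wm (vstar : V) : V) →
      (Submodule.orthogonalProjectionOnto Wm ustar : V) = ω ∧
      (∀ v : V, (Submodule.orthogonalProjectionOnto Wm v : V) = ω →
        ‖ustar - (Submodule.orthogonalProjectionOnto Vn ustar : V)‖
          ≤ ‖v - (Submodule.orthogonalProjectionOnto Vn v : V)‖) ∧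
      (∀ v : V, (Submodule.orthogonalProjectionOnto Wm v : V) = ω →
        ‖v - (Submodule.orthogonalProjectionOnto Vn v : V)‖
          = ‖ustar - (Submodule.orthogonalProjectionOnto Vn ustar : V)‖ → v = ustar) := by
  rintro _ rfl
  simp only [coe_orthogonalProjectionOnto_apply]
  have hP := Wm.starProjection_add_sub_starProjection hω vstar
  have hres : (vstar : V) + ω - Wm.starProjection vstar
      - Vn.starProjection ((vstar : V) + ω - Wm.starProjection vstar) ∈ Wm := by
    rw [Vn.sub_starProjection_add_sub_starProjection Wm vstar.2 (congrArg Subtype.val hvstar)]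
    exact Wm.sub_mem hω (Wm.starProjection_apply_mem _)
  have hperp {v : V} (hv : Wm.starProjection v = ω) :
      v - ((vstar : V) + ω - Wm.starProjection vstar) ∈ Wmᗮ := by
    rw [← starProjection_apply_eq_zero_iff Wm, map_sub, hv, hP, sub_self]
  exact ⟨hP, fun v hv => norm_sub_starProjection_le hres (hperp hv),
    fun v hv => eq_of_norm_sub_starProjection_eq hβ hres (hperp hv)⟩
end

section
/- Let V be a real Hilbert space, V_n a finite-dimensional subspace and W_m a complete subspace of V with β := β(V_n, W_m) > 0. For ω ∈ W_m define the PBDW reconstruction u*(ω) := v*(ω) + ω − P_{W_m} v*(ω) with v*(ω) := (P_{V_n}∘P_{W_m}|_{V_n})^{-1}(P_{V_n} ω). Then for every u ∈ V, ‖u − u*(P_{W_m} u)‖ ≤ (1/β) · ε(u, V_n, W_m), where ε(u, V_n, W_m) := inf{‖u − v‖ : v ∈ V_n + (W_m ∩ V_n^⊥)}. -/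
/-!
The reconstruction error is `e := (u - v*) - P_W (u - v*) ∈ W_mᗮ`, and the defining equation of
`v*` puts `P_W (u - v*)` in `W_m ∩ V_nᗮ`, so `u - e ∈ Z := V_n + (W_m ∩ V_nᗮ)`. For `w ∈ Z` write
`w - (u - e) = y + η` with `y ∈ V_n`, `η ∈ W_m ∩ V_nᗮ`; then `u - w = (e - y) - η` with
`η ⊥ e - y`, so `‖u - w‖ ≥ ‖e - y‖`. Finally `‖e - y‖ ≥ β ‖e‖`: since `e ∈ W_mᗮ` only sees the
component of `y` orthogonal to `W_m`, whose norm is at most `√(1 - β²) ‖y‖`, Cauchy–Schwarz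
gives `‖e - y‖² ≥ ‖e‖² - 2√(1 - β²) ‖e‖ ‖y‖ + ‖y‖² ≥ β² ‖e‖²`.
-/

open RealInnerProductSpace

namespace Submodule

variable {V : Type*} [NormedAddCommGroup V] [InnerProductSpace ℝ V]

/-- `β(X, Y)`. For `X = ⊥` the infimum is over the empty set, so this is `0` rather than `+∞`. -/
noncomputable def infSupConst (X Y : Submodule ℝ V) [Y.HasOrthogonalProjection] : ℝ :=
  sInf {r : ℝ | ∃ v ∈ X, v ≠ 0 ∧ r = ‖Y.starProjection v‖ / ‖v‖}

variable {X Y : Submodule ℝ V} [Y.HasOrthogonalProjection]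

lemma infSupConst_nonneg : 0 ≤ infSupConst X Y :=
  Real.sInf_nonneg (by rintro _ ⟨v, -, -, rfl⟩; positivity)

lemma infSupConst_mul_norm_le {v : V} (hv : v ∈ X) :
    infSupConst X Y * ‖v‖ ≤ ‖Y.starProjection v‖ := by
  rcases eq_or_ne v 0 with rfl | hv0
  · simp
  · rw [← le_div_iff₀ (norm_pos_iff.2 hv0)]
    exact csInf_le ⟨0, by rintro _ ⟨w, -, -, rfl⟩; positivity⟩ ⟨v, hv, hv0, rfl⟩

lemma infSupConst_le_one : infSupConst X Y ≤ 1 := by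
  by_cases h : ∃ v ∈ X, v ≠ 0
  · obtain ⟨v, hv, hv0⟩ := h
    refine le_of_mul_le_mul_right ?_ (norm_pos_iff.2 hv0)
    rw [one_mul]
    exact (infSupConst_mul_norm_le hv).trans (Y.norm_starProjection_apply_le v)
  · push Not at h
    have hempty : {r : ℝ | ∃ v ∈ X, v ≠ 0 ∧ r = ‖Y.starProjection v‖ / ‖v‖} = ∅ :=
      Set.eq_empty_of_forall_notMem fun _ ⟨v, hv, hv0, _⟩ ↦ hv0 (h v hv)
    rw [infSupConst, hempty, Real.sInf_empty]
    exact zero_le_one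

lemma norm_starProjection_orthogonal_sq_le {v : V} (hv : v ∈ X) :
    ‖Yᗮ.starProjection v‖ ^ 2 ≤ (1 - infSupConst X Y ^ 2) * ‖v‖ ^ 2 := by
  have hβ := infSupConst_mul_norm_le (Y := Y) hv
  have hβ0 := mul_nonneg (infSupConst_nonneg (X := X) (Y := Y)) (norm_nonneg v)
  nlinarith [norm_sq_eq_add_norm_sq_starProjection v Y, mul_self_le_mul_self hβ0 hβ]

lemma infSupConst_mul_norm_le_norm_sub {e v : V} (he : e ∈ Yᗮ) (hv : v ∈ X) :
    infSupConst X Y * ‖e‖ ≤ ‖e - v‖ := by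
  set β := infSupConst X Y
  have hβ0 : 0 ≤ β := infSupConst_nonneg
  have hβ1 : β ≤ 1 := infSupConst_le_one
  set s := √(1 - β ^ 2)
  have hs : s ^ 2 = 1 - β ^ 2 := Real.sq_sqrt (by nlinarith)
  have hperp : ‖Yᗮ.starProjection v‖ ≤ s * ‖v‖ := by
    rw [← pow_le_pow_iff_left₀ (norm_nonneg _) (by positivity) two_ne_zero, mul_pow, hs]
    exact norm_starProjection_orthogonal_sq_le hv
  have hinner : ⟪e, v⟫ = ⟪e, Yᗮ.starProjection v⟫ := by
    rw [← inner_starProjection_left_eq_right, starProjection_eq_self_iff.2 he]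
  have hcs : ⟪e, v⟫ ≤ ‖e‖ * (s * ‖v‖) :=
    hinner ▸ (real_inner_le_norm _ _).trans (by gcongr)
  refine le_of_sq_le_sq ?_ (norm_nonneg _)
  rw [norm_sub_sq_real]
  nlinarith [sq_nonneg (‖v‖ - s * ‖e‖), congrArg (· * ‖e‖ ^ 2) hs]

lemma infSupConst_mul_norm_le_norm_sub_of_mem_sup {e w : V} (he : e ∈ Yᗮ)
    (hw : w ∈ X ⊔ (Y ⊓ Xᗮ)) : infSupConst X Y * ‖e‖ ≤ ‖e - w‖ := by
  obtain ⟨y, hy, η, hη, rfl⟩ := mem_sup.1 hw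
  have horth : ⟪e - y, η⟫ = 0 := by
    rw [inner_sub_left, inner_left_of_mem_orthogonal hη.1 he,
      inner_right_of_mem_orthogonal hy hη.2, sub_zero]
  have hpyth := norm_sub_sq_eq_norm_sq_add_norm_sq_real horth
  calc infSupConst X Y * ‖e‖ ≤ ‖e - y‖ := infSupConst_mul_norm_le_norm_sub he hy
    _ ≤ ‖e - (y + η)‖ := by
      rw [← sub_sub]
      nlinarith [norm_nonneg (e - y), norm_nonneg (e - y - η), mul_self_nonneg ‖η‖]

theorem infSupConst_mul_norm_sub_le_infDist {u z : V} (hz : z ∈ X ⊔ (Y ⊓ Xᗮ))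
    (hu : u - z ∈ Yᗮ) :
    infSupConst X Y * ‖u - z‖ ≤ Metric.infDist u (X ⊔ (Y ⊓ Xᗮ) : Submodule ℝ V) := by
  refine (Metric.le_infDist ⟨z, hz⟩).2 fun w hw ↦ ?_
  rw [dist_eq_norm, ← sub_sub_sub_cancel_right u w z]
  exact infSupConst_mul_norm_le_norm_sub_of_mem_sup hu (sub_mem hw hz)

end Submodule

/-- The PBDW reconstruction error bound
`‖u − u*(P_{W_m} u)‖ ≤ (1/β) · ε(u, V_n, W_m)`, where
`ε(u, V_n, W_m) = inf {‖u − v‖ : v ∈ V_n + (W_m ∩ V_n^⊥)}` and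
`u*(ω) = v*(ω) + ω − P_{W_m} v*(ω)` with `v*(ω)` characterized by
`P_{V_n}(P_{W_m} v*(ω)) = P_{V_n} ω`, here with `ω = P_{W_m} u`. -/
theorem stmt3 {V : Type*} [NormedAddCommGroup V] [InnerProductSpace ℝ V]
    (Vn Wm : Submodule ℝ V) [FiniteDimensional ℝ Vn] [CompleteSpace Wm]
    (β : ℝ)
    (hβdef : β = sInf {r : ℝ | ∃ v ∈ Vn, v ≠ 0 ∧
      r = ‖(Submodule.orthogonalProjection Wm v : V)‖ / ‖v‖})
    (hβ : 0 < β)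
    (u : V) (vstar : Vn)
    (hvstar : Submodule.orthogonalProjection Vn ((Submodule.orthogonalProjection Wm (vstar : V) : V))
      = Submodule.orthogonalProjection Vn ((Submodule.orthogonalProjection Wm u : V))) :
    ‖u - ((vstar : V) + (Submodule.orthogonalProjection Wm u : V)
        - (Submodule.orthogonalProjection Wm (vstar : V) : V))‖
      ≤ (1 / β) * Metric.infDist u ((Vn ⊔ (Wm ⊓ Vnᗮ) : Submodule ℝ V) : Set V) := by
  have hβ' : β = Vn.infSupConst Wm := hβdef
  have hPW : Wm.starProjection (u - vstar) ∈ Wm ⊓ Vnᗮ := by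
    refine ⟨Wm.starProjection_apply_mem _, Submodule.orthogonalProjectionOnto_eq_zero_iff.1 ?_⟩
    rw [map_sub, map_sub]
    exact sub_eq_zero.2 hvstar.symm
  change ‖u - ((vstar : V) + Wm.starProjection u - Wm.starProjection vstar)‖ ≤ _
  rw [add_sub_assoc, ← map_sub, one_div_mul_eq_div, le_div_iff₀' hβ, hβ']
  refine Submodule.infSupConst_mul_norm_sub_le_infDist (Submodule.add_mem_sup vstar.2 hPW) ?_
  rw [← sub_sub]
  exact Wm.sub_starProjection_mem_orthogonal _
end

section
/- Let V be a real Hilbert space, V_n a finite-dimensional subspace and W_m a complete subspace of V with β := β(V_n, W_m) > 0. For ω ∈ W_m let v*(ω) := (P_{V_n}∘P_{W_m}|_{V_n})^{-1}(P_{V_n} ω) ∈ V_n. Then for every u ∈ V, ‖u − v*(P_{W_m} u)‖ ≤ (1/β) · dist(u, V_n), where dist(u, V_n) := inf_{v∈V_n} ‖u − v‖. -/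
/-!
Write `η = u - v*`. The defining equation of `v*` says `P_W η ⊥ V_n`, so `η ⊥ P_W a` for
`a = P_{V_n} η`. Since moreover `⟪a, P_W a⟫ = ‖P_W a‖²`, the vector `P_W a` is bounded by the
distance from `a` to the line `ℝ η`, which is `‖a‖ ‖b‖ / ‖η‖` for `b = η - a ⊥ a`.
Together with `β ‖a‖ ≤ ‖P_W a‖` this gives `β ‖η‖ ≤ ‖b‖ = dist(u, V_n)`.
-/

open scoped RealInnerProductSpace

section

variable {V : Type*} [NormedAddCommGroup V] [InnerProductSpace ℝ V]

theorem norm_mul_norm_add_le_of_inner_eq_zero {a b q : V} (hab : ⟪a, b⟫ = 0)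
    (hq : ⟪a + b, q⟫ = 0) (haq : ⟪a, q⟫ = ‖q‖ ^ 2) : ‖q‖ * ‖a + b‖ ≤ ‖a‖ * ‖b‖ := by
  -- `w` is `‖a + b‖²` times the component of `a` orthogonal to `a + b`.
  set w : V := ‖b‖ ^ 2 • a - ‖a‖ ^ 2 • b
  have hbq : ⟪b, q⟫ = -‖q‖ ^ 2 := by rw [inner_add_left, haq] at hq; linarith
  have hwq : ⟪w, q⟫ = ‖a + b‖ ^ 2 * ‖q‖ ^ 2 := by
    rw [inner_sub_left, real_inner_smul_left, real_inner_smul_left, haq, hbq,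
      norm_add_sq_real, hab]
    ring
  have hw : ‖w‖ = ‖a‖ * ‖b‖ * ‖a + b‖ := by
    have hsq : ‖w‖ ^ 2 = (‖a‖ * ‖b‖ * ‖a + b‖) ^ 2 := by
      have hpyth : ‖a + b‖ ^ 2 = ‖a‖ ^ 2 + ‖b‖ ^ 2 := by rw [norm_add_sq_real, hab]; ring
      rw [norm_sub_sq_real, real_inner_smul_left, real_inner_smul_right, hab, norm_smul,
        norm_smul, norm_pow, norm_pow, norm_norm, norm_norm]
      linear_combination (-(‖a‖ ^ 2 * ‖b‖ ^ 2)) * hpyth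
    exact (pow_left_inj₀ (norm_nonneg _) (by positivity) two_ne_zero).mp hsq
  have hcs : (‖q‖ * ‖a + b‖) ^ 2 ≤ ‖a‖ * ‖b‖ * (‖q‖ * ‖a + b‖) := by
    calc (‖q‖ * ‖a + b‖) ^ 2 = ⟪w, q⟫ := by rw [hwq]; ring
      _ ≤ ‖w‖ * ‖q‖ := real_inner_le_norm w q
      _ = ‖a‖ * ‖b‖ * (‖q‖ * ‖a + b‖) := by rw [hw]; ring
  rcases (mul_nonneg (norm_nonneg q) (norm_nonneg (a + b))).eq_or_lt with h0 | hpos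
  · rw [← h0]; positivity
  · exact le_of_mul_le_mul_right (by rwa [← sq]) hpos

namespace Submodule

/-- The inf-sup constant `β(X, Y)`; it is `0` for `X = ⊥`, where the set is empty. -/
noncomputable def infSupConstant (X Y : Submodule ℝ V) [Y.HasOrthogonalProjection] : ℝ :=
  sInf {r : ℝ | ∃ v ∈ X, v ≠ 0 ∧ r = ‖(Y.orthogonalProjectionOnto v : V)‖ / ‖v‖}

variable {X Y : Submodule ℝ V} [Y.HasOrthogonalProjection]

theorem bddBelow_infSupConstant_set :
    BddBelow {r : ℝ | ∃ v ∈ X, v ≠ 0 ∧ r = ‖(Y.orthogonalProjectionOnto v : V)‖ / ‖v‖} :=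
  ⟨0, by rintro _ ⟨v, -, -, rfl⟩; positivity⟩

theorem infSupConstant_mul_norm_le {v : V} (hv : v ∈ X) :
    infSupConstant X Y * ‖v‖ ≤ ‖Y.starProjection v‖ := by
  rcases eq_or_ne v 0 with rfl | hv0
  · simp
  · rw [← le_div_iff₀ (norm_pos_iff.mpr hv0)]
    exact csInf_le bddBelow_infSupConstant_set ⟨v, hv, hv0, rfl⟩

theorem infSupConstant_le_one : infSupConstant X Y ≤ 1 := by
  rcases Set.eq_empty_or_nonempty
      {r : ℝ | ∃ v ∈ X, v ≠ 0 ∧ r = ‖(Y.orthogonalProjectionOnto v : V)‖ / ‖v‖} with h | ⟨r, hr⟩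
  · rw [infSupConstant, h, Real.sInf_empty]
    exact zero_le_one
  · obtain ⟨v, hv, hv0, rfl⟩ := hr
    refine (csInf_le bddBelow_infSupConstant_set ⟨v, hv, hv0, rfl⟩).trans ?_
    exact div_le_one_of_le₀ (Y.norm_orthogonalProjectionOnto_apply_le v) (norm_nonneg v)

theorem infSupConstant_mul_norm_le_norm_sub_starProjection [X.HasOrthogonalProjection] {η : V}
    (hη : X.starProjection (Y.starProjection η) = 0) :
    infSupConstant X Y * ‖η‖ ≤ ‖η - X.starProjection η‖ := by
  set a := X.starProjection η
  set b := η - a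
  have ha : a ∈ X := X.starProjection_apply_mem η
  have hab : ⟪a, b⟫ = 0 := by
    rw [real_inner_comm]; exact X.starProjection_inner_eq_zero η a ha
  have hηq : ⟪a + b, Y.starProjection a⟫ = 0 := by
    rw [add_sub_cancel, ← inner_starProjection_left_eq_right, real_inner_comm]
    exact (X.starProjection_apply_eq_zero_iff.mp hη) a ha
  have haq : ⟪a, Y.starProjection a⟫ = ‖Y.starProjection a‖ ^ 2 := by
    simpa [real_inner_comm] using Y.re_inner_starProjection_eq_normSq a
  have hkey := norm_mul_norm_add_le_of_inner_eq_zero hab hηq haq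
  rw [add_sub_cancel] at hkey
  rcases eq_or_ne a 0 with ha0 | ha0
  · rw [show b = η by simp [b, ha0]]
    exact mul_le_of_le_one_left (norm_nonneg η) infSupConstant_le_one
  · refine le_of_mul_le_mul_left ?_ (norm_pos_iff.mpr ha0)
    calc ‖a‖ * (infSupConstant X Y * ‖η‖) = infSupConstant X Y * ‖a‖ * ‖η‖ := by ring
      _ ≤ ‖Y.starProjection a‖ * ‖η‖ := by gcongr; exact infSupConstant_mul_norm_le ha
      _ ≤ ‖a‖ * ‖b‖ := hkey

theorem infDist_eq_norm_sub_starProjection (K : Submodule ℝ V) [K.HasOrthogonalProjection]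
    (u : V) : Metric.infDist u (K : Set V) = ‖u - K.starProjection u‖ := by
  rw [Metric.infDist_eq_iInf, starProjection_minimal]
  simp only [dist_eq_norm]
  rfl

end Submodule

end

/-- The bound `‖u − v*(P_{W_m} u)‖ ≤ (1/β) · dist(u, V_n)` for the
`V_n`-component `v*` of the PBDW reconstruction, `v*(ω)` being characterized by
`P_{V_n}(P_{W_m} v*(ω)) = P_{V_n} ω`, here with `ω = P_{W_m} u`. -/
theorem stmt4 {V : Type*} [NormedAddCommGroup V] [InnerProductSpace ℝ V]
    (Vn Wm : Submodule ℝ V) [FiniteDimensional ℝ Vn] [CompleteSpace Wm]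
    (β : ℝ)
    (hβdef : β = sInf {r : ℝ | ∃ v ∈ Vn, v ≠ 0 ∧
      r = ‖(Submodule.orthogonalProjectionOnto Wm v : V)‖ / ‖v‖})
    (hβ : 0 < β)
    (u : V) (vstar : Vn)
    (hvstar : Submodule.orthogonalProjectionOnto Vn ((Submodule.orthogonalProjectionOnto Wm (vstar : V) : V))
      = Submodule.orthogonalProjectionOnto Vn ((Submodule.orthogonalProjectionOnto Wm u : V))) :
    ‖u - (vstar : V)‖ ≤ (1 / β) * Metric.infDist u (Vn : Set V) := by
  have hβ' : β = Vn.infSupConstant Wm := hβdef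
  have hη : Vn.starProjection (Wm.starProjection (u - vstar)) = 0 := by
    simp only [Submodule.starProjection_apply, map_sub, hvstar, sub_self]
  have hdist : ‖(u - vstar) - Vn.starProjection (u - vstar)‖ = Metric.infDist u (Vn : Set V) := by
    rw [Vn.infDist_eq_norm_sub_starProjection, map_sub,
      Submodule.starProjection_eq_self_iff.mpr vstar.2, sub_sub_sub_cancel_right]
  rw [one_div_mul_eq_div, le_div_iff₀' hβ, ← hdist, hβ']
  exact Submodule.infSupConstant_mul_norm_le_norm_sub_starProjection hη
end

section
/- Let V be a real Hilbert space, let V_n be an n-dimensional subspace with orthonormal basis v₁, …, v_n, and let W_m be an m-dimensional subspace with basis ω₁, …, ω_m, where 1 ≤ n ≤ m. Define the Gram matrices A ∈ ℝ^{m×m} with A_{ij} = ⟨ω_i, ω_j⟩ and B ∈ ℝ^{m×n} with B_{is} = ⟨ω_i, v_s⟩, and set M := Bᵀ A⁻¹ B ∈ ℝ^{n×n}. Then A is invertible, M is symmetric positive semidefinite, and β(V_n, W_m)², the square of the inf-sup constant, equals the smallest eigenvalue of M; equivalently, for every coefficient vector c ∈ ℝⁿ with ‖c‖ = 1 and x :=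 Σ_{s=1}^n c_s v_s, one has ‖P_{W_m} x‖² = cᵀ M c, and β(V_n, W_m)² = inf{cᵀ M c : c ∈ ℝⁿ, ‖c‖ = 1}. -/
/-!
Writing `x = ∑ cₛ vₛ`, the projection `P_W x = ∑ dᵢ ωᵢ` is characterised by the normal equations
`A d = B c`, so `‖P_W x‖² = dᵀ A d = (B c)ᵀ A⁻¹ (B c) = cᵀ M c`. Since `v` is orthonormal, the unit
vectors of `V_n` are exactly the `x` with `‖c‖ = 1`, and scaling `x` to norm one turns the
inf-sup ratio into `‖P_W x‖`; squaring commutes with the infimum of nonnegative reals. Finally the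
minimum of the Rayleigh quotient `cᵀ M c` on the unit sphere is the smallest eigenvalue: it is
attained at a corresponding eigenvector, and `M - λ_min • 1` is positive semidefinite since its
spectrum is nonnegative.
-/

open scoped RealInnerProductSpace Matrix

section

open scoped MatrixOrder
open Matrix Submodule Set

lemma sq_sInf_of_nonneg {S : Set ℝ} (hS : ∀ r ∈ S, 0 ≤ r) :
    sInf S ^ 2 = sInf ((· ^ 2) '' S) := by
  rcases S.eq_empty_or_nonempty with rfl | hne
  · simp
  · exact MonotoneOn.map_csInf_of_continuousWithinAt (continuous_pow 2).continuousWithinAt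
      (fun a ha _ _ hab => pow_le_pow_left₀ (hS a ha) hab 2) hne ⟨0, hS⟩

section RatioSet

variable {E F : Type*} [NormedAddCommGroup E] [NormedSpace ℝ E]
  [NormedAddCommGroup F] [NormedSpace ℝ F]

lemma Submodule.setOf_norm_apply_div_norm_eq {𝓕 : Type*} [FunLike 𝓕 E F]
    [LinearMapClass 𝓕 ℝ E F] (K : Submodule ℝ E) (f : 𝓕) :
    {r | ∃ x ∈ K, x ≠ 0 ∧ r = ‖f x‖ / ‖x‖} = {r | ∃ x ∈ K, ‖x‖ = 1 ∧ r = ‖f x‖} := by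
  ext r
  constructor
  · rintro ⟨x, hxK, hx0, rfl⟩
    have hx : 0 < ‖x‖ := norm_pos_iff.mpr hx0
    refine ⟨‖x‖⁻¹ • x, K.smul_mem _ hxK, ?_, ?_⟩
    · rw [norm_smul, norm_inv, norm_norm, inv_mul_cancel₀ hx.ne']
    · rw [map_smul, norm_smul, norm_inv, norm_norm, div_eq_inv_mul]
  · rintro ⟨x, hxK, hx1, rfl⟩
    exact ⟨x, hxK, norm_ne_zero_iff.mp (by rw [hx1]; exact one_ne_zero), by rw [hx1, div_one]⟩

end RatioSet

section Orthonormal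

variable {V : Type*} [NormedAddCommGroup V] [InnerProductSpace ℝ V]
  {ι : Type*} [Fintype ι] {v : ι → V}

lemma Orthonormal.norm_sum_smul_sq (hv : Orthonormal ℝ v) (c : ι → ℝ) :
    ‖∑ i, c i • v i‖ ^ 2 = ∑ i, c i ^ 2 := by
  rw [← real_inner_self_eq_norm_sq, hv.inner_sum]
  simp [sq]

lemma Orthonormal.mem_span_and_norm_eq_one_iff (hv : Orthonormal ℝ v) {x : V} :
    x ∈ span ℝ (range v) ∧ ‖x‖ = 1 ↔ ∃ c : ι → ℝ, ∑ i, c i ^ 2 = 1 ∧ ∑ i, c i • v i = x := by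
  rw [mem_span_range_iff_exists_fun]
  constructor
  · rintro ⟨⟨c, rfl⟩, hx⟩
    exact ⟨c, by rw [← hv.norm_sum_smul_sq, hx, one_pow], rfl⟩
  · rintro ⟨c, hc, rfl⟩
    refine ⟨⟨c, rfl⟩, ?_⟩
    rw [← pow_eq_one_iff_of_nonneg (norm_nonneg _) two_ne_zero, hv.norm_sum_smul_sq, hc]

lemma Orthonormal.setOf_norm_apply_div_norm_eq {F : Type*} [NormedAddCommGroup F]
    [NormedSpace ℝ F] {𝓕 : Type*} [FunLike 𝓕 V F] [LinearMapClass 𝓕 ℝ V F]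
    (hv : Orthonormal ℝ v) (f : 𝓕) :
    {r | ∃ x ∈ span ℝ (range v), x ≠ 0 ∧ r = ‖f x‖ / ‖x‖} =
      {r | ∃ c : ι → ℝ, ∑ i, c i ^ 2 = 1 ∧ r = ‖f (∑ i, c i • v i)‖} := by
  rw [Submodule.setOf_norm_apply_div_norm_eq]
  ext r
  constructor
  · rintro ⟨x, hxK, hx1, rfl⟩
    obtain ⟨c, hc, rfl⟩ := hv.mem_span_and_norm_eq_one_iff.mp ⟨hxK, hx1⟩
    exact ⟨c, hc, rfl⟩
  · rintro ⟨c, hc, rfl⟩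
    obtain ⟨hxK, hx1⟩ := hv.mem_span_and_norm_eq_one_iff.mpr ⟨c, hc, rfl⟩
    exact ⟨_, hxK, hx1, rfl⟩

lemma Orthonormal.sInf_norm_apply_div_norm_sq {F : Type*} [NormedAddCommGroup F]
    [NormedSpace ℝ F] {𝓕 : Type*} [FunLike 𝓕 V F] [LinearMapClass 𝓕 ℝ V F]
    (hv : Orthonormal ℝ v) (f : 𝓕) :
    sInf {r | ∃ x ∈ span ℝ (range v), x ≠ 0 ∧ r = ‖f x‖ / ‖x‖} ^ 2 =
      sInf {r | ∃ c : ι → ℝ, ∑ i, c i ^ 2 = 1 ∧ r = ‖f (∑ i, c i • v i)‖ ^ 2} := by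
  rw [hv.setOf_norm_apply_div_norm_eq, sq_sInf_of_nonneg (by rintro _ ⟨c, -, rfl⟩; positivity)]
  congr 1
  ext r
  constructor
  · rintro ⟨_, ⟨c, hc, rfl⟩, rfl⟩
    exact ⟨c, hc, rfl⟩
  · rintro ⟨c, hc, rfl⟩
    exact ⟨_, ⟨c, hc, rfl⟩, rfl⟩

end Orthonormal

section GramProjection

variable {V : Type*} [NormedAddCommGroup V] [InnerProductSpace ℝ V]
  {ι : Type*} [Fintype ι] [DecidableEq ι] {w : ι → V}

omit [DecidableEq ι] in
lemma gram_mulVec_apply (w : ι → V) (d : ι → ℝ) (j : ι) :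
    (gram ℝ w *ᵥ d) j = ⟪w j, ∑ i, d i • w i⟫ := by
  simp only [mulVec, dotProduct, gram_apply, inner_sum, real_inner_smul_right, mul_comm]

lemma gram_mulVec_inv_mulVec (hw : LinearIndependent ℝ w) (b : ι → ℝ) :
    gram ℝ w *ᵥ ((gram ℝ w)⁻¹ *ᵥ b) = b := by
  rw [mulVec_mulVec, mul_nonsing_inv _ (isUnit_iff_ne_zero.mpr
    (det_gram_ne_zero_iff_linearIndependent.mpr hw)), one_mulVec]

lemma starProjection_span_eq_sum (hw : LinearIndependent ℝ w)
    [(span ℝ (range w)).HasOrthogonalProjection] (x : V) :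
    (span ℝ (range w)).starProjection x =
      ∑ i, ((gram ℝ w)⁻¹ *ᵥ fun j => ⟪w j, x⟫) i • w i := by
  set d := (gram ℝ w)⁻¹ *ᵥ fun j => ⟪w j, x⟫
  refine eq_starProjection_of_mem_of_inner_eq_zero
    (sum_mem fun i _ => smul_mem _ _ (subset_span ⟨i, rfl⟩)) fun z hz => ?_
  have hspan : span ℝ (range w) ≤ LinearMap.ker (innerₛₗ ℝ (x - ∑ i, d i • w i)) := by
    refine span_le.mpr ?_
    rintro _ ⟨j, rfl⟩
    simp only [SetLike.mem_coe, LinearMap.mem_ker, innerₛₗ_apply_apply, inner_sub_left]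
    rw [real_inner_comm, real_inner_comm (w j), ← gram_mulVec_apply, gram_mulVec_inv_mulVec hw,
      sub_self]
  exact hspan hz

lemma norm_starProjection_span_sq (hw : LinearIndependent ℝ w)
    [(span ℝ (range w)).HasOrthogonalProjection] (x : V) :
    ‖(span ℝ (range w)).starProjection x‖ ^ 2 =
      (fun j => ⟪w j, x⟫) ⬝ᵥ (gram ℝ w)⁻¹ *ᵥ fun j => ⟪w j, x⟫ := by
  rw [starProjection_span_eq_sum hw, ← real_inner_self_eq_norm_sq,
    ← star_dotProduct_gram_mulVec, star_trivial, gram_mulVec_inv_mulVec hw, dotProduct_comm]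

end GramProjection

lemma dotProduct_transpose_mul_mul_mulVec {m n : Type*} [Fintype m] [Fintype n]
    (B : Matrix m n ℝ) (N : Matrix m m ℝ) (c : n → ℝ) :
    c ⬝ᵥ (Bᵀ * N * B) *ᵥ c = (B *ᵥ c) ⬝ᵥ N *ᵥ (B *ᵥ c) := by
  rw [← mulVec_mulVec, ← mulVec_mulVec, dotProduct_mulVec, vecMul_transpose]

lemma Matrix.IsHermitian.iInf_eigenvalues_mul_dotProduct_self_le {n : Type*} [Fintype n]
    [DecidableEq n] {M : Matrix n n ℝ} (hM : M.IsHermitian) (c : n → ℝ) :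
    (⨅ i, hM.eigenvalues i) * (c ⬝ᵥ c) ≤ c ⬝ᵥ M *ᵥ c := by
  have hpsd : (M - algebraMap ℝ _ (⨅ i, hM.eigenvalues i)).PosSemidef := by
    rw [← Matrix.le_iff]
    refine algebraMap_le_of_le_spectrum ?_ hM
    rw [hM.spectrum_real_eq_range_eigenvalues]
    rintro _ ⟨i, rfl⟩
    exact ciInf_le (Finite.bddBelow_range _) i
  simpa [sub_mulVec, Algebra.algebraMap_eq_smul_one, smul_mulVec]
    using hpsd.dotProduct_mulVec_nonneg c

lemma Matrix.IsHermitian.sInf_dotProduct_mulVec_eq_iInf_eigenvalues {n : Type*} [Fintype n]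
    [DecidableEq n] {M : Matrix n n ℝ} (hM : M.IsHermitian) :
    sInf {r | ∃ c : n → ℝ, ∑ i, c i ^ 2 = 1 ∧ r = c ⬝ᵥ M *ᵥ c} = ⨅ i, hM.eigenvalues i := by
  rcases isEmpty_or_nonempty n with hn | hn
  · simp
  have hbound : (⨅ i, hM.eigenvalues i) ∈
      lowerBounds {r | ∃ c : n → ℝ, ∑ i, c i ^ 2 = 1 ∧ r = c ⬝ᵥ M *ᵥ c} := by
    rintro _ ⟨c, hc, rfl⟩
    have hcc : c ⬝ᵥ c = 1 := by simpa only [dotProduct, sq] using hc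
    simpa [hcc] using hM.iInf_eigenvalues_mul_dotProduct_self_le c
  obtain ⟨j, hj⟩ := exists_eq_ciInf_of_finite (f := hM.eigenvalues)
  have hunit : ∑ i, hM.eigenvectorBasis j i ^ 2 = 1 := by
    rw [← EuclideanSpace.real_norm_sq_eq, hM.eigenvectorBasis.orthonormal.1 j, one_pow]
  rw [← hj] at hbound ⊢
  refine le_antisymm (csInf_le ⟨_, hbound⟩ ⟨_, hunit, ?_⟩) (le_csInf ⟨_, _, hunit, rfl⟩ hbound)
  simpa using hM.eigenvalues_eq j

end

theorem stmt8_general {V : Type*} [NormedAddCommGroup V] [InnerProductSpace ℝ V]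
    (n m : ℕ)
    (v : Fin n → V) (ω : Fin m → V)
    (Vn Wm : Submodule ℝ V) [CompleteSpace Wm]
    (hv : Orthonormal ℝ v) (hVn : Vn = Submodule.span ℝ (Set.range v))
    (hω : LinearIndependent ℝ ω) (hWm : Wm = Submodule.span ℝ (Set.range ω))
    (A : Matrix (Fin m) (Fin m) ℝ) (hA : ∀ i j, A i j = ⟪ω i, ω j⟫)
    (B : Matrix (Fin m) (Fin n) ℝ) (hB : ∀ i s, B i s = ⟪ω i, v s⟫)
    (M : Matrix (Fin n) (Fin n) ℝ) (hM : M = Bᵀ * A⁻¹ * B) :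
    IsUnit A.det ∧
    M.PosSemidef ∧
    (∀ c : Fin n → ℝ, (∑ s, (c s) ^ 2 = 1) →
      ‖(Submodule.orthogonalProjectionOnto Wm (∑ s, c s • v s) : V)‖ ^ 2 = c ⬝ᵥ M.mulVec c) ∧
    (sInf {r : ℝ | ∃ x ∈ Vn, x ≠ 0 ∧
        r = ‖(Submodule.orthogonalProjectionOnto Wm x : V)‖ / ‖x‖}) ^ 2
      = sInf {r : ℝ | ∃ c : Fin n → ℝ, (∑ s, (c s) ^ 2 = 1) ∧ r = c ⬝ᵥ M.mulVec c} ∧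
    (∀ hH : M.IsHermitian,
      (sInf {r : ℝ | ∃ x ∈ Vn, x ≠ 0 ∧
          r = ‖(Submodule.orthogonalProjectionOnto Wm x : V)‖ / ‖x‖}) ^ 2
        = ⨅ i, hH.eigenvalues i) := by
  subst hVn hWm hM
  obtain rfl : A = Matrix.gram ℝ ω := Matrix.ext hA
  simp only [Submodule.coe_orthogonalProjectionOnto_apply]
  have hBc (c : Fin n → ℝ) : B *ᵥ c = fun i => ⟪ω i, ∑ s, c s • v s⟫ := by
    ext i
    simp only [Matrix.mulVec, dotProduct, hB, inner_sum, real_inner_smul_right, mul_comm]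
  have hquad (c : Fin n → ℝ) :
      ‖(Submodule.span ℝ (Set.range ω)).starProjection (∑ s, c s • v s)‖ ^ 2 =
        c ⬝ᵥ (Bᵀ * (Matrix.gram ℝ ω)⁻¹ * B) *ᵥ c := by
    rw [dotProduct_transpose_mul_mul_mulVec, hBc, norm_starProjection_span_sq hω]
  have hinfsup := hv.sInf_norm_apply_div_norm_sq (Submodule.span ℝ (Set.range ω)).starProjection
  simp only [hquad] at hinfsup
  have hpsd : (Bᵀ * (Matrix.gram ℝ ω)⁻¹ * B).PosSemidef := by
    rw [← Matrix.conjTranspose_eq_transpose_of_trivial]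
    exact (Matrix.posSemidef_gram ℝ ω).inv.conjTranspose_mul_mul_same B
  exact ⟨isUnit_iff_ne_zero.mpr (Matrix.det_gram_ne_zero_iff_linearIndependent.mpr hω), hpsd,
    fun c _ => hquad c, hinfsup,
    fun hH => hinfsup.trans hH.sInf_dotProduct_mulVec_eq_iInf_eigenvalues⟩

/-- With an orthonormal basis `v` of `V_n` and a basis `ω` of `W_m`
(`1 ≤ n ≤ m`), the Gram matrices `A_{ij} = ⟪ω_i, ω_j⟫`, `B_{is} = ⟪ω_i, v_s⟫` and
`M = Bᵀ A⁻¹ B` satisfy: `A` is invertible, `M` is symmetric positive semidefinite,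
`‖P_{W_m}(Σ c_s v_s)‖² = cᵀ M c` for unit vectors `c`, and `β(V_n, W_m)²` equals
`inf {cᵀ M c : ‖c‖ = 1}`, which is the smallest eigenvalue of `M`. -/
theorem stmt8 {V : Type*} [NormedAddCommGroup V] [InnerProductSpace ℝ V]
    (n m : ℕ) (hn : 1 ≤ n) (hnm : n ≤ m)
    (v : Fin n → V) (ω : Fin m → V)
    (Vn Wm : Submodule ℝ V) [CompleteSpace Wm]
    (hv : Orthonormal ℝ v) (hVn : Vn = Submodule.span ℝ (Set.range v))
    (hω : LinearIndependent ℝ ω) (hWm : Wm = Submodule.span ℝ (Set.range ω))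
    (A : Matrix (Fin m) (Fin m) ℝ) (hA : ∀ i j, A i j = ⟪ω i, ω j⟫)
    (B : Matrix (Fin m) (Fin n) ℝ) (hB : ∀ i s, B i s = ⟪ω i, v s⟫)
    (M : Matrix (Fin n) (Fin n) ℝ) (hM : M = Bᵀ * A⁻¹ * B) :
    IsUnit A.det ∧
    M.PosSemidef ∧
    (∀ c : Fin n → ℝ, (∑ s, (c s) ^ 2 = 1) →
      ‖(Submodule.orthogonalProjectionOnto Wm (∑ s, c s • v s) : V)‖ ^ 2 = c ⬝ᵥ M.mulVec c) ∧
    (sInf {r : ℝ | ∃ x ∈ Vn, x ≠ 0 ∧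
        r = ‖(Submodule.orthogonalProjectionOnto Wm x : V)‖ / ‖x‖}) ^ 2
      = sInf {r : ℝ | ∃ c : Fin n → ℝ, (∑ s, (c s) ^ 2 = 1) ∧ r = c ⬝ᵥ M.mulVec c} ∧
    (∀ hH : M.IsHermitian,
      (sInf {r : ℝ | ∃ x ∈ Vn, x ≠ 0 ∧
          r = ‖(Submodule.orthogonalProjectionOnto Wm x : V)‖ / ‖x‖}) ^ 2
        = ⨅ i, hH.eigenvalues i) :=
  stmt8_general n m v ω Vn Wm hv hVn hω hWm A hA B hB M hM
end

section
/- Fix an index i ∈ {1,…,m}, matrices A ∈ ℝ^{m×m} symmetric and invertible, B ∈ ℝ^{m×n}, A_D ∈ ℝ^{m×m}, B_D ∈ ℝ^{m×n}, and a vector c ∈ ℝⁿ. Define δB ∈ ℝ^{m×n} by (δB)_{j,s} := δ_{ij} (B_D)_{j,s} and δA ∈ ℝ^{m×m} by (δA)_{j,k} := δ_{ji} (A_D)_{j,k} + δ_{ik} (A_D)_{k,j} (δ denoting the Kronecker delta). Then 2 cᵀ (δB)ᵀ A⁻¹ B c − cᵀ Bᵀ A⁻¹ (δA) A⁻¹ B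 c = 2 [(A⁻¹ B c) ⊙ (B_D c − A_D A⁻¹ B c)]_i, where ⊙ denotes the componentwise (Hadamard) product of vectors in ℝ^m and [·]_i the i-th component. -/
open scoped Matrix

/-- The matrix-algebra identity giving the `i`-th component of the
gradient of the squared inf-sup constant: with `δB` and `δA` the structured
perturbation matrices built from `B_D` and `A_D` via Kronecker deltas,
`2 cᵀ δBᵀ A⁻¹ B c − cᵀ Bᵀ A⁻¹ δA A⁻¹ B c
  = 2 [(A⁻¹ B c) ⊙ (B_D c − A_D A⁻¹ B c)]_i`. -/
theorem stmt11 {m n : ℕ} (i : Fin m)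
    (A : Matrix (Fin m) (Fin m) ℝ) (hA : A.IsSymm) (hAinv : IsUnit A.det)
    (B : Matrix (Fin m) (Fin n) ℝ)
    (AD : Matrix (Fin m) (Fin m) ℝ) (BD : Matrix (Fin m) (Fin n) ℝ)
    (c : Fin n → ℝ)
    (δB : Matrix (Fin m) (Fin n) ℝ)
    (hδB : ∀ j s, δB j s = (if i = j then (1 : ℝ) else 0) * BD j s)
    (δA : Matrix (Fin m) (Fin m) ℝ)
    (hδA : ∀ j k, δA j k = (if j = i then (1 : ℝ) else 0) * AD j k
      + (if i = k then (1 : ℝ) else 0) * AD k j) :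
    2 * (c ⬝ᵥ (δBᵀ * A⁻¹ * B).mulVec c)
      - c ⬝ᵥ (Bᵀ * A⁻¹ * δA * A⁻¹ * B).mulVec c
    = 2 * (((A⁻¹ * B).mulVec c) i
        * (BD.mulVec c i - ((AD * A⁻¹ * B).mulVec c) i)) := by
  have hAinvsymm : A⁻¹ᵀ = A⁻¹ := by
    rw [Matrix.transpose_nonsing_inv, hA.eq]
  set w : Fin m → ℝ := (A⁻¹ * B).mulVec c with hw
  -- δB *ᵥ c
  have hδBc : ∀ j, δB.mulVec c j = (if i = j then (1:ℝ) else 0) * BD.mulVec c j := by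
    intro j
    simp only [Matrix.mulVec, dotProduct, hδB, Finset.mul_sum, mul_assoc]
  -- Term 1
  have h1 : c ⬝ᵥ (δBᵀ * A⁻¹ * B).mulVec c = w i * BD.mulVec c i := by
    rw [Matrix.mul_assoc, ← Matrix.mulVec_mulVec, Matrix.dotProduct_mulVec,
      Matrix.vecMul_transpose, ← hw]
    simp only [dotProduct, hδBc]
    rw [Finset.sum_eq_single i]
    · simp [mul_comm]
    · intro b _ hb; simp [Ne.symm hb]
    · simp
  -- Term 2
  have h2 : c ⬝ᵥ (Bᵀ * A⁻¹ * δA * A⁻¹ * B).mulVec c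
      = 2 * (w i * (AD.mulVec w) i) := by
    have hBA : Bᵀ * A⁻¹ = (A⁻¹ * B)ᵀ := by
      rw [Matrix.transpose_mul, hAinvsymm]
    rw [Matrix.mul_assoc (Bᵀ * A⁻¹ * δA), ← Matrix.mulVec_mulVec, ← hw,
      hBA, ← Matrix.mulVec_mulVec, Matrix.dotProduct_mulVec,
      Matrix.vecMul_transpose, ← hw]
    have hδAw : ∀ j, δA.mulVec w j
        = (if j = i then (1:ℝ) else 0) * AD.mulVec w j + w i * AD i j := by
      intro j
      simp only [Matrix.mulVec, dotProduct, hδA, add_mul, Finset.sum_add_distrib,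
        Finset.mul_sum, mul_assoc]
      congr 1
      rw [Finset.sum_eq_single i]
      · simp [mul_comm]
      · intro b _ hb; simp [Ne.symm hb]
      · simp
    have hADw : ∑ j, w j * AD i j = AD.mulVec w i := by
      simp [Matrix.mulVec, dotProduct, mul_comm]
    simp only [dotProduct, hδAw, mul_add, Finset.sum_add_distrib]
    rw [Finset.sum_eq_single i]
    · simp only [if_pos rfl, one_mul]
      have : ∑ j, w j * (w i * AD i j) = w i * ∑ j, w j * AD i j := by
        rw [Finset.mul_sum]; congr 1; ext j; ring
      rw [this, hADw]; simp only [if_true]; ring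
    · intro b _ hb; simp [hb]
    · simp
  rw [h1, h2]
  simp [Matrix.mul_assoc, ← Matrix.mulVec_mulVec, ← hw]
  ring
end
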